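/- arXiv:2604.26228 — 8 statements merged into one kernel-verified Lean document; each statement's English description precedes it below -/
import Mathlib

section
/- With d = -proj_{aff(B_K)}(0) for the unit generators u^1,...,u^p of the polyhedral cone K, if v ∈ R^n satisfies ‖v‖ ≤ ‖d‖², then d + v lies in the polar cone K°. -/
/-!
Every generator `u i` lies in the affine hull, on which `d` is orthogonal to `x + d`, so
`⟪d, u i⟫ = -‖d‖²`; Cauchy–Schwarz gives `⟪v, u i⟫ ≤ ‖v‖ ≤ ‖d‖²`, hence `⟪d + v, u i⟫ ≤ 0`,
and this passes to nonnegative combinations of the generators.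
-/

open scoped RealInnerProductSpace

section

variable {E : Type*} [NormedAddCommGroup E] [InnerProductSpace ℝ E]

lemma real_inner_eq_neg_norm_sq_of_inner_add_eq_zero {x d : E} (h : ⟪x + d, d⟫ = 0) :
    ⟪d, x⟫ = -‖d‖ ^ 2 := by
  rw [inner_add_left, real_inner_comm, real_inner_self_eq_norm_sq] at h
  linarith

lemma real_inner_add_nonpos_of_inner_eq_neg_norm_sq {d v u : E} (hdu : ⟪d, u⟫ = -‖d‖ ^ 2)
    (hu : ‖u‖ ≤ 1) (hv : ‖v‖ ≤ ‖d‖ ^ 2) : ⟪d + v, u⟫ ≤ 0 := by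
  have hvu : ⟪v, u⟫ ≤ ‖d‖ ^ 2 :=
    calc ⟪v, u⟫ ≤ ‖v‖ * ‖u‖ := real_inner_le_norm v u
      _ ≤ ‖v‖ := mul_le_of_le_one_right (norm_nonneg v) hu
      _ ≤ ‖d‖ ^ 2 := hv
  rw [inner_add_left]
  linarith

lemma real_inner_sum_smul_nonpos {ι : Type*} (s : Finset ι) {w : E} {u : ι → E} {c : ι → ℝ}
    (hc : ∀ i, 0 ≤ c i) (hwu : ∀ i, ⟪w, u i⟫ ≤ 0) : ⟪w, ∑ i ∈ s, c i • u i⟫ ≤ 0 := by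
  rw [inner_sum]
  exact Finset.sum_nonpos fun i _ ↦ by
    rw [real_inner_smul_right]
    exact mul_nonpos_of_nonneg_of_nonpos (hc i) (hwu i)

end

theorem stmt2_general {n p : ℕ} (u : Fin p → EuclideanSpace ℝ (Fin n))
    (hu : ∀ i, ‖u i‖ = 1)
    (d : EuclideanSpace ℝ (Fin n))
    (horth : ∀ x ∈ affineSpan ℝ (Set.range u), ⟪x + d, d⟫ = 0)
    (v : EuclideanSpace ℝ (Fin n)) (hv : ‖v‖ ≤ ‖d‖ ^ 2) :
    ∀ z ∈ {z : EuclideanSpace ℝ (Fin n) |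
        ∃ c : Fin p → ℝ, (∀ i, 0 ≤ c i) ∧ z = ∑ i, c i • u i},
      ⟪d + v, z⟫ ≤ 0 := by
  rintro z ⟨c, hc, rfl⟩
  refine real_inner_sum_smul_nonpos _ hc fun i ↦ ?_
  have hdu : ⟪d, u i⟫ = -‖d‖ ^ 2 :=
    real_inner_eq_neg_norm_sq_of_inner_add_eq_zero (horth _ (subset_affineSpan ℝ _ ⟨i, rfl⟩))
  exact real_inner_add_nonpos_of_inner_eq_neg_norm_sq hdu (hu i).le hv

theorem stmt2 {n p : ℕ} (u : Fin p → EuclideanSpace ℝ (Fin n))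
    (hu : ∀ i, ‖u i‖ = 1)
    (d : EuclideanSpace ℝ (Fin n))
    (hmem : -d ∈ affineSpan ℝ (Set.range u))
    (horth : ∀ x ∈ affineSpan ℝ (Set.range u), ⟪x + d, d⟫ = 0)
    (v : EuclideanSpace ℝ (Fin n)) (hv : ‖v‖ ≤ ‖d‖ ^ 2) :
    ∀ z ∈ {z : EuclideanSpace ℝ (Fin n) |
        ∃ c : Fin p → ℝ, (∀ i, 0 ≤ c i) ∧ z = ∑ i, c i • u i},
      ⟪d + v, z⟫ ≤ 0 :=
  stmt2_general u hu d horth v hv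
end

section
/- Let K = cone{u^1,...,u^p} with unit generators, d = -proj_{aff(B_K)}(0), and for w ∈ R^n \ {0} define ρ_K(w) = sup{t ≥ 0 : d + t w ∈ K°}. Then ρ_K(w) = +∞ if max_i ⟨w,u^i⟩ ≤ 0, and ρ_K(w) = ‖d‖² / max_i ⟨w,u^i⟩ otherwise. -/
open scoped RealInnerProductSpace ENNReal

/-!
Orthogonality of `d` to `aff{uⁱ} + d` gives `⟪d, uⁱ⟫ = -‖d‖²`, so `d + t • w ∈ K°` says exactly
`t ⟪w, uⁱ⟫ ≤ ‖d‖²` for all `i`. For `t ≥ 0` this is the half-line `[0, ∞)` when every `⟪w, uⁱ⟫ ≤ 0`,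
and otherwise the interval `[0, ‖d‖² / maxᵢ ⟪w, uⁱ⟫]`.
-/

lemma inner_add_smul_eq_of_inner_add_self_eq_zero {E : Type*} [NormedAddCommGroup E]
    [InnerProductSpace ℝ E] {d x : E} (h : ⟪x + d, d⟫ = 0) (t : ℝ) (w : E) :
    ⟪d + t • w, x⟫ = t * ⟪w, x⟫ - ‖d‖ ^ 2 := by
  rw [inner_add_left, real_inner_self_eq_norm_sq] at h
  rw [inner_add_left, real_inner_smul_left, real_inner_comm]
  linarith

section NonnegMulLe

variable {ι : Type*} {a : ι → ℝ} {c : ℝ}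

lemma setOf_nonneg_and_mul_le_eq_Ici (ha : ∀ i, a i ≤ 0) (hc : 0 ≤ c) :
    {t : ℝ | 0 ≤ t ∧ ∀ i, t * a i ≤ c} = Set.Ici 0 := by
  ext t
  refine ⟨And.left, fun ht => ⟨ht, fun i => ?_⟩⟩
  exact (mul_nonpos_of_nonneg_of_nonpos ht (ha i)).trans hc

lemma setOf_nonneg_and_mul_le_eq_Icc [Fintype ι] (hι : (Finset.univ : Finset ι).Nonempty)
    (ha : 0 < Finset.univ.sup' hι a) :
    {t : ℝ | 0 ≤ t ∧ ∀ i, t * a i ≤ c} = Set.Icc 0 (c / Finset.univ.sup' hι a) := by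
  ext t
  simp only [Set.mem_ofPred_eq, Set.mem_Icc, le_div_iff₀ ha, and_congr_right_iff]
  intro ht
  obtain ⟨i₀, -, hi₀⟩ := Finset.exists_mem_eq_sup' hι a
  refine ⟨fun h => hi₀ ▸ h i₀, fun h i => le_trans ?_ h⟩
  exact mul_le_mul_of_nonneg_left (Finset.le_sup' a (Finset.mem_univ i)) ht

end NonnegMulLe

lemma ENNReal.biSup_ofReal_Ici (a : ℝ) : ⨆ t ∈ Set.Ici a, ENNReal.ofReal t = ⊤ := by
  refine ENNReal.eq_top_of_forall_nnreal_le fun r => ?_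
  rw [← ENNReal.ofReal_coe_nnreal]
  exact le_iSup₂_of_le (max a r) (le_max_left a r) (ENNReal.ofReal_le_ofReal (le_max_right a r))

lemma ENNReal.biSup_ofReal_Icc {a b : ℝ} (hab : a ≤ b) :
    ⨆ t ∈ Set.Icc a b, ENNReal.ofReal t = ENNReal.ofReal b :=
  le_antisymm (iSup₂_le fun _ ht => ENNReal.ofReal_le_ofReal ht.2)
    (le_iSup₂_of_le b ⟨hab, le_rfl⟩ le_rfl)

theorem stmt3_general {n p : ℕ} (hp : 0 < p) (u : Fin p → EuclideanSpace ℝ (Fin n))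
    (d : EuclideanSpace ℝ (Fin n))
    (horth : ∀ x ∈ affineSpan ℝ (Set.range u), ⟪x + d, d⟫ = 0)
    (w : EuclideanSpace ℝ (Fin n)) :
    ((∀ i, ⟪w, u i⟫ ≤ 0) →
      (⨆ t ∈ {t : ℝ | 0 ≤ t ∧ ∀ i, ⟪d + t • w, u i⟫ ≤ 0}, ENNReal.ofReal t) = ⊤) ∧
    (¬ (∀ i, ⟪w, u i⟫ ≤ 0) →
      (⨆ t ∈ {t : ℝ | 0 ≤ t ∧ ∀ i, ⟪d + t • w, u i⟫ ≤ 0}, ENNReal.ofReal t) =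
        ENNReal.ofReal (‖d‖ ^ 2 /
          (Finset.univ.sup' (Finset.univ_nonempty_iff.mpr (Fin.pos_iff_nonempty.mp hp))
            fun i => ⟪w, u i⟫))) := by
  have hS : {t : ℝ | 0 ≤ t ∧ ∀ i, ⟪d + t • w, u i⟫ ≤ 0} =
      {t : ℝ | 0 ≤ t ∧ ∀ i, t * ⟪w, u i⟫ ≤ ‖d‖ ^ 2} := by
    ext t
    simp only [Set.mem_ofPred_eq, sub_nonpos, inner_add_smul_eq_of_inner_add_self_eq_zero
      (horth _ (mem_affineSpan ℝ (Set.mem_range_self _)))]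
  rw [hS]
  refine ⟨fun h => ?_, fun h => ?_⟩
  · rw [setOf_nonneg_and_mul_le_eq_Ici h (sq_nonneg _), ENNReal.biSup_ofReal_Ici]
  · obtain ⟨i, hi⟩ := not_forall.mp h
    have hmax := (not_le.mp hi).trans_le (Finset.le_sup' (fun i => ⟪w, u i⟫) (Finset.mem_univ i))
    rw [setOf_nonneg_and_mul_le_eq_Icc _ hmax,
      ENNReal.biSup_ofReal_Icc (div_nonneg (sq_nonneg _) hmax.le)]

theorem stmt3 {n p : ℕ} (hp : 0 < p) (u : Fin p → EuclideanSpace ℝ (Fin n))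
    (hu : ∀ i, ‖u i‖ = 1)
    (d : EuclideanSpace ℝ (Fin n))
    (hmem : -d ∈ affineSpan ℝ (Set.range u))
    (horth : ∀ x ∈ affineSpan ℝ (Set.range u), ⟪x + d, d⟫ = 0)
    (w : EuclideanSpace ℝ (Fin n)) (hw : w ≠ 0) :
    ((∀ i, ⟪w, u i⟫ ≤ 0) →
      (⨆ t ∈ {t : ℝ | 0 ≤ t ∧ ∀ i, ⟪d + t • w, u i⟫ ≤ 0}, ENNReal.ofReal t) = ⊤) ∧
    (¬ (∀ i, ⟪w, u i⟫ ≤ 0) →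
      (⨆ t ∈ {t : ℝ | 0 ≤ t ∧ ∀ i, ⟪d + t • w, u i⟫ ≤ 0}, ENNReal.ofReal t) =
        ENNReal.ofReal (‖d‖ ^ 2 /
          (Finset.univ.sup' (Finset.univ_nonempty_iff.mpr (Fin.pos_iff_nonempty.mp hp))
            fun i => ⟪w, u i⟫))) :=
  stmt3_general hp u d horth w
end

section
/- Let u^1,...,u^p be linearly independent unit vectors in R^n with Gram matrix M, and d = -proj_{aff{u^1,...,u^p}}(0). Then λ_min(M)/p ≤ ‖d‖² ≤ λ_max(M)/p ≤ 1, where λ_min and λ_max are the smallest and largest eigenvalues of M. -/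
/-!
Write `-d = ∑ cᵢ uᵢ` with `∑ cᵢ = 1`. Then `‖d‖² = cᵀ M c ≥ λ_min ‖c‖² ≥ λ_min / p`, because
`(∑ cᵢ)² ≤ p ‖c‖²`. Orthogonality of `d` to the affine span gives `⟪uᵢ, d⟫ = -‖d‖²` for all `i`,
so for `s = ∑ uᵢ` Cauchy–Schwarz yields `(p ‖d‖²)² ≤ ‖s‖² ‖d‖² = 𝟙ᵀ M 𝟙 ‖d‖² ≤ p λ_max ‖d‖²`.
Finally `λ_max ≤ trace M = p`, as `M` is positive semidefinite with unit diagonal.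
-/

open Finset Matrix
open scoped RealInnerProductSpace MatrixOrder

namespace Matrix.IsHermitian

variable {n : Type*} [Fintype n] [DecidableEq n] {A : Matrix n n ℝ}

theorem dotProduct_mulVec_le_of_eigenvalues_le (hA : A.IsHermitian) {r : ℝ}
    (h : ∀ i, hA.eigenvalues i ≤ r) (x : n → ℝ) : x ⬝ᵥ A *ᵥ x ≤ r * (x ⬝ᵥ x) := by
  have hle : A ≤ algebraMap ℝ _ r := le_algebraMap_of_spectrum_le (ha := hA.isSelfAdjoint)
    fun _ hμ ↦ by
      obtain ⟨i, rfl⟩ := hA.spectrum_real_eq_range_eigenvalues ▸ hμ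
      exact h i
  have := (le_iff.mp hle).dotProduct_mulVec_nonneg x
  simpa [sub_mulVec, dotProduct_sub, Algebra.algebraMap_eq_smul_one, smul_mulVec,
    dotProduct_smul, sub_nonneg] using this

theorem mul_dotProduct_le_dotProduct_mulVec_of_le_eigenvalues (hA : A.IsHermitian) {r : ℝ}
    (h : ∀ i, r ≤ hA.eigenvalues i) (x : n → ℝ) : r * (x ⬝ᵥ x) ≤ x ⬝ᵥ A *ᵥ x := by
  have hle : algebraMap ℝ _ r ≤ A := algebraMap_le_of_le_spectrum (ha := hA.isSelfAdjoint)
    fun _ hμ ↦ by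
      obtain ⟨i, rfl⟩ := hA.spectrum_real_eq_range_eigenvalues ▸ hμ
      exact h i
  have := (le_iff.mp hle).dotProduct_mulVec_nonneg x
  simpa [sub_mulVec, dotProduct_sub, Algebra.algebraMap_eq_smul_one, smul_mulVec,
    dotProduct_smul, sub_nonneg] using this

end Matrix.IsHermitian

section Gram

variable {E ι : Type*} [NormedAddCommGroup E] [InnerProductSpace ℝ E] [Fintype ι]

theorem Matrix.dotProduct_gram_mulVec (u : ι → E) (c : ι → ℝ) :
    c ⬝ᵥ gram ℝ u *ᵥ c = ‖∑ i, c i • u i‖ ^ 2 := by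
  rw [← real_inner_self_eq_norm_sq, ← star_dotProduct_gram_mulVec, star_trivial]

variable [DecidableEq ι]

theorem Matrix.eigenvalues_gram_le_card {u : ι → E} (hu : ∀ i, ‖u i‖ = 1)
    (hG : (gram ℝ u).IsHermitian) (i : ι) : hG.eigenvalues i ≤ Fintype.card ι := by
  have htrace : (gram ℝ u).trace = Fintype.card ι := by simp [trace, hu]
  rw [← htrace, hG.trace_eq_sum_eigenvalues]
  exact single_le_sum (fun j _ ↦ (posSemidef_gram ℝ u).eigenvalues_nonneg j) (mem_univ i)

theorem inf'_eigenvalues_gram_div_card_le_norm_sq (u : ι → E) (hι : (univ : Finset ι).Nonempty)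
    (hG : (gram ℝ u).IsHermitian) {x : E} (hx : x ∈ affineSpan ℝ (Set.range u)) :
    univ.inf' hι hG.eigenvalues / Fintype.card ι ≤ ‖x‖ ^ 2 := by
  obtain ⟨c, hc1, rfl⟩ := eq_affineCombination_of_mem_affineSpan_of_fintype hx
  set lmin := univ.inf' hι hG.eigenvalues
  have hcard : (0 : ℝ) < Fintype.card ι := by exact_mod_cast hι.card_pos
  have hlmin : 0 ≤ lmin :=
    (le_inf'_iff _ _).mpr fun i _ ↦ (posSemidef_gram ℝ u).eigenvalues_nonneg i
  have hc : 1 ≤ Fintype.card ι * (c ⬝ᵥ c) := by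
    simpa [hc1, dotProduct, sq] using sq_sum_le_card_mul_sum_sq (s := univ) (f := c)
  rw [univ.affineCombination_eq_linear_combination u c hc1, ← dotProduct_gram_mulVec,
    div_le_iff₀ hcard]
  calc lmin ≤ lmin * (Fintype.card ι * (c ⬝ᵥ c)) := le_mul_of_one_le_right hlmin hc
    _ = lmin * (c ⬝ᵥ c) * Fintype.card ι := by ring
    _ ≤ c ⬝ᵥ gram ℝ u *ᵥ c * Fintype.card ι := by
      gcongr
      exact hG.mul_dotProduct_le_dotProduct_mulVec_of_le_eigenvalues
        (fun i ↦ inf'_le _ (mem_univ i)) c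

theorem card_mul_norm_sq_le_sup'_eigenvalues_gram (u : ι → E) (hι : (univ : Finset ι).Nonempty)
    (hG : (gram ℝ u).IsHermitian) {d : E} (hd : ∀ i, ⟪u i, d⟫ = -‖d‖ ^ 2) :
    Fintype.card ι * ‖d‖ ^ 2 ≤ univ.sup' hι hG.eigenvalues := by
  set lmax := univ.sup' hι hG.eigenvalues
  set s := ∑ i, u i
  have hlmax : 0 ≤ lmax := by
    obtain ⟨i, -⟩ := hι
    exact ((posSemidef_gram ℝ u).eigenvalues_nonneg i).trans (le_sup' _ (mem_univ i))
  have hsd : Fintype.card ι * ‖d‖ ^ 2 ≤ ‖s‖ * ‖d‖ :=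
    calc Fintype.card ι * ‖d‖ ^ 2 = ⟪s, -d⟫ := by simp [s, sum_inner, hd]
      _ ≤ ‖s‖ * ‖-d‖ := real_inner_le_norm s (-d)
      _ = ‖s‖ * ‖d‖ := by rw [norm_neg]
  have hs : ‖s‖ ^ 2 ≤ lmax * Fintype.card ι := by
    have := hG.dotProduct_mulVec_le_of_eigenvalues_le (r := lmax)
      (fun i ↦ le_sup' _ (mem_univ i)) 1
    rw [dotProduct_gram_mulVec] at this
    simpa [s] using this
  nlinarith [norm_nonneg s, norm_nonneg d]

end Gram

theorem stmt5_general {n p : ℕ} (hp : 0 < p) (u : Fin p → EuclideanSpace ℝ (Fin n))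
    (hu : ∀ i, ‖u i‖ = 1)
    (hM : (Matrix.of fun i j => ⟪u i, u j⟫ : Matrix (Fin p) (Fin p) ℝ).IsHermitian)
    (d : EuclideanSpace ℝ (Fin n))
    (hmem : -d ∈ affineSpan ℝ (Set.range u))
    (horth : ∀ x ∈ affineSpan ℝ (Set.range u), ⟪x + d, d⟫ = 0) :
    (Finset.univ.inf' (Finset.univ_nonempty_iff.mpr (Fin.pos_iff_nonempty.mp hp))
        hM.eigenvalues) / p ≤ ‖d‖ ^ 2 ∧
    ‖d‖ ^ 2 ≤ (Finset.univ.sup' (Finset.univ_nonempty_iff.mpr (Fin.pos_iff_nonempty.mp hp))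
        hM.eigenvalues) / p ∧
    (Finset.univ.sup' (Finset.univ_nonempty_iff.mpr (Fin.pos_iff_nonempty.mp hp))
        hM.eigenvalues) / p ≤ 1 := by
  have hp' : (0 : ℝ) < p := by exact_mod_cast hp
  have hne : (univ : Finset (Fin p)).Nonempty := univ_nonempty_iff.mpr (Fin.pos_iff_nonempty.mp hp)
  have hud (i : Fin p) : ⟪u i, d⟫ = -‖d‖ ^ 2 := by
    have := horth (u i) (subset_affineSpan ℝ _ ⟨i, rfl⟩)
    rw [inner_add_left, real_inner_self_eq_norm_sq] at this
    linarith
  refine ⟨?_, ?_, ?_⟩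
  · have := inf'_eigenvalues_gram_div_card_le_norm_sq u hne hM hmem
    rwa [Fintype.card_fin, norm_neg] at this
  · have := card_mul_norm_sq_le_sup'_eigenvalues_gram u hne hM hud
    rwa [Fintype.card_fin, mul_comm, ← le_div_iff₀ hp'] at this
  · have hle (i : Fin p) : hM.eigenvalues i ≤ p := by
      have := eigenvalues_gram_le_card hu hM i
      rwa [Fintype.card_fin] at this
    rw [div_le_one hp']
    exact sup'_le _ _ fun i _ ↦ hle i

theorem stmt5 {n p : ℕ} (hp : 0 < p) (u : Fin p → EuclideanSpace ℝ (Fin n))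
    (hu : ∀ i, ‖u i‖ = 1) (hli : LinearIndependent ℝ u)
    (hM : (Matrix.of fun i j => ⟪u i, u j⟫ : Matrix (Fin p) (Fin p) ℝ).IsHermitian)
    (d : EuclideanSpace ℝ (Fin n))
    (hmem : -d ∈ affineSpan ℝ (Set.range u))
    (horth : ∀ x ∈ affineSpan ℝ (Set.range u), ⟪x + d, d⟫ = 0) :
    (Finset.univ.inf' (Finset.univ_nonempty_iff.mpr (Fin.pos_iff_nonempty.mp hp))
        hM.eigenvalues) / p ≤ ‖d‖ ^ 2 ∧
    ‖d‖ ^ 2 ≤ (Finset.univ.sup' (Finset.univ_nonempty_iff.mpr (Fin.pos_iff_nonempty.mp hp))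
        hM.eigenvalues) / p ∧
    (Finset.univ.sup' (Finset.univ_nonempty_iff.mpr (Fin.pos_iff_nonempty.mp hp))
        hM.eigenvalues) / p ≤ 1 :=
  stmt5_general hp u hu hM d hmem horth
end

section
/- Let K ⊂ R^n be a nontrivial closed convex pointed cone with E_K the set of unit vectors on extreme rays, and suppose 0 ∉ closure(aff(E_K)). Set d = -proj_{closure(aff(E_K))}(0). Then d ≠ 0, ⟨d, u⟩ = -‖d‖² for every u ∈ E_K, and d + v ∈ K° whenever ‖v‖ ≤ ‖d‖². -/
open scoped RealInnerProductSpace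

/-- The set of unit vectors spanning extreme rays of a cone `K`. -/
def extremalSection {E : Type*} [NormedAddCommGroup E] [InnerProductSpace ℝ E]
    (K : Set E) : Set E :=
  {u | ‖u‖ = 1 ∧ IsExtreme ℝ K {x | ∃ t : ℝ, 0 ≤ t ∧ x = t • u}}

/-- `d` is the circumcentric direction of `K`, i.e. `-d` is the orthogonal projection of the
origin onto the closure of the affine hull of the extremal section of `K`. -/
def IsCircumcentricDir {E : Type*} [NormedAddCommGroup E] [InnerProductSpace ℝ E]
    (K : Set E) (d : E) : Prop :=
  -d ∈ closure (affineSpan ℝ (extremalSection K) : Set E) ∧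
    ∀ x ∈ closure (affineSpan ℝ (extremalSection K) : Set E), ⟪x + d, d⟫ = 0

/-!
A closed pointed cone `K` in a finite-dimensional space has a compact base
`K ∩ {x | ⟪e, x⟫ = 1}`: separating `-x` from `K` for each unit vector `x ∈ K` and using
compactness of `K ∩ sphere 0 1` gives a functional `e` with `c * ‖x‖ ≤ ⟪e, x⟫` on `K`.
Extreme points of the base span extreme rays of `K`, so by Krein–Milman a functional that is
nonpositive on the extremal section `E_K` is nonpositive on `K`. Since `-d` is the projection
of `0` onto the affine hull of `E_K`, the vector `u + d` is orthogonal to `d` for `u ∈ E_K`,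
i.e. `⟪d, u⟫ = -‖d‖ ^ 2`, and then `⟪d + v, u⟫ ≤ -‖d‖ ^ 2 + ‖v‖ ≤ 0`.
-/

lemma ProperCone.exists_coe_eq {E : Type*} [AddCommGroup E] [Module ℝ E] [TopologicalSpace E]
    {K : Set E} (hne : K.Nonempty) (hclosed : IsClosed K) (hconv : Convex ℝ K)
    (hcone : ∀ t : ℝ, 0 ≤ t → ∀ x ∈ K, t • x ∈ K) :
    ∃ C : ProperCone ℝ E, (C : Set E) = K := by
  obtain ⟨x₀, hx₀⟩ := hne
  refine ⟨⟨⟨⟨⟨K, fun {x y} hx hy => ?_⟩, ?_⟩, fun c x hx => hcone c c.2 x hx⟩, hclosed⟩, rfl⟩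
  · have hmid := hcone 2 zero_le_two _
      (hconv hx hy (by norm_num : (0 : ℝ) ≤ 1 / 2) (by norm_num : (0 : ℝ) ≤ 1 / 2) (by norm_num))
    simpa [smul_add, smul_smul] using hmid
  · simpa using hcone 0 le_rfl x₀ hx₀

variable {E : Type*} [NormedAddCommGroup E] [InnerProductSpace ℝ E]

lemma PointedCone.coe_hull_singleton (u : E) :
    (PointedCone.hull ℝ {u} : Set E) = {x | ∃ t : ℝ, 0 ≤ t ∧ x = t • u} := by
  ext x
  simp only [SetLike.mem_coe, Submodule.mem_span_singleton, Set.mem_ofPred_eq]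
  constructor
  · rintro ⟨t, rfl⟩
    exact ⟨t, t.2, rfl⟩
  · rintro ⟨t, ht, rfl⟩
    exact ⟨⟨t, ht⟩, rfl⟩

lemma PointedCone.hull_singleton_smul {c : ℝ} (hc : 0 < c) (u : E) :
    PointedCone.hull ℝ {c • u} = PointedCone.hull ℝ {u} :=
  Submodule.span_singleton_smul_eq (r := (⟨c, hc.le⟩ : {r : ℝ // 0 ≤ r}))
    (isUnit_iff_ne_zero.2 (Subtype.coe_ne_coe.1 hc.ne')) u

lemma mem_extremalSection_iff {K : Set E} {u : E} :
    u ∈ extremalSection K ↔ ‖u‖ = 1 ∧ IsExtreme ℝ K (PointedCone.hull ℝ {u}) := by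
  rw [PointedCone.coe_hull_singleton]; rfl

def coneBase (C : Set E) (e : E) : Set E := C ∩ {x | ⟪e, x⟫ = 1}

lemma convex_coneBase {C : Set E} (hC : Convex ℝ C) (e : E) : Convex ℝ (coneBase C e) :=
  hC.inter (convex_hyperplane (innerₛₗ ℝ e).isLinear 1)

lemma isCompact_coneBase [ProperSpace E] {C : Set E} (hC : IsClosed C) {e : E} {c : ℝ} (hc : 0 < c)
    (he : ∀ x ∈ C, c * ‖x‖ ≤ ⟪e, x⟫) : IsCompact (coneBase C e) := by
  refine Metric.isCompact_of_isClosed_isBounded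
    (hC.inter (isClosed_eq (continuous_const.inner continuous_id) continuous_const))
    ((Metric.isBounded_closedBall (x := 0) (r := c⁻¹)).subset ?_)
  rintro x ⟨hxC, hx⟩
  rw [mem_closedBall_zero_iff]
  calc ‖x‖ = c⁻¹ * (c * ‖x‖) := by field_simp
    _ ≤ c⁻¹ * ⟪e, x⟫ := by gcongr; exact he x hxC
    _ = c⁻¹ := by rw [hx.out, mul_one]

lemma ne_zero_of_mem_coneBase {C : Set E} {e x : E} (hx : x ∈ coneBase C e) : x ≠ 0 := by
  rintro rfl
  simpa using hx.2.out

namespace ProperCone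

variable {C : ProperCone ℝ E}

lemma inv_inner_smul_mem_coneBase {e x : E} (hx : x ∈ C) (hpos : 0 < ⟪e, x⟫) :
    ⟪e, x⟫⁻¹ • x ∈ coneBase C e :=
  ⟨C.smul_mem hx (inv_nonneg.2 hpos.le), by
    simp only [Set.mem_ofPred_eq, real_inner_smul_right, inv_mul_cancel₀ hpos.ne']⟩

lemma exists_inner_pos_of_mem_sphere [FiniteDimensional ℝ E] (hC : (C : Set E) ∩ -C ⊆ {0}) :
    ∃ e : E, ∀ x ∈ (C : Set E) ∩ Metric.sphere 0 1, 0 < ⟪e, x⟫ := by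
  set S := (C : Set E) ∩ Metric.sphere 0 1
  set D := {y : E | ∀ z ∈ C, 0 ≤ ⟪y, z⟫}
  have hsep : S ⊆ ⋃ y : D, {x | 0 < ⟪(y : E), x⟫} := by
    rintro x ⟨hxC, hx1⟩
    have hnx : -x ∉ C := fun hnx => by
      have hx0 : x = 0 := hC ⟨hxC, by simpa using hnx⟩
      simp [hx0] at hx1
    obtain ⟨y, hyC, hyx⟩ := C.hyperplane_separation' hnx
    refine Set.mem_iUnion.2 ⟨⟨y, fun z hz => ?_⟩, ?_⟩
    · rw [real_inner_comm]; exact hyC z hz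
    · rw [inner_neg_left, real_inner_comm] at hyx
      exact neg_neg_iff_pos.1 hyx
  obtain ⟨t, ht⟩ := ((isCompact_sphere 0 1).inter_left C.isClosed).elim_finite_subcover _
    (fun y => isOpen_lt continuous_const (continuous_const.inner continuous_id)) hsep
  refine ⟨∑ y ∈ t, (y : E), fun x hx => ?_⟩
  obtain ⟨y, hyt, hyx⟩ := Set.mem_iUnion₂.1 (ht hx)
  rw [sum_inner]
  exact Finset.sum_pos' (fun z _ => z.2 x hx.1) ⟨y, hyt, hyx⟩

lemma exists_pos_mul_norm_le_inner [FiniteDimensional ℝ E] (hC : (C : Set E) ∩ -C ⊆ {0}) :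
    ∃ e : E, ∃ c : ℝ, 0 < c ∧ ∀ x ∈ C, c * ‖x‖ ≤ ⟪e, x⟫ := by
  obtain ⟨e, he⟩ := exists_inner_pos_of_mem_sphere hC
  obtain ⟨c, hc, hce⟩ := ((isCompact_sphere 0 1).inter_left C.isClosed).exists_forall_le'
    (f := fun y => ⟪e, y⟫) (continuous_const.inner continuous_id).continuousOn he
  refine ⟨e, c, hc, fun x hx => ?_⟩
  rcases eq_or_ne x 0 with rfl | hx0
  · simp
  have hnx : 0 < ‖x‖ := norm_pos_iff.2 hx0
  have hu := hce (‖x‖⁻¹ • x)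
    ⟨C.smul_mem hx (inv_nonneg.2 hnx.le), mem_sphere_zero_iff_norm.2 (norm_smul_inv_norm hx0)⟩
  rw [real_inner_smul_right, le_inv_mul_iff₀ hnx] at hu
  linarith

variable {e : E}

lemma isFaceOf_hull_of_mem_extremePoints (he : ∀ z ∈ C, z ≠ 0 → 0 < ⟪e, z⟫) {x : E}
    (hx : x ∈ (coneBase C e).extremePoints ℝ) :
    (PointedCone.hull ℝ {x}).IsFaceOf (C : PointedCone ℝ E) := by
  refine PointedCone.IsFaceOf.of_mem_of_add_mem_left
    (Submodule.span_le.2 (Set.singleton_subset_iff.2 hx.1.1)) fun {a b} ha hb hab => ?_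
  rw [← SetLike.mem_coe, PointedCone.coe_hull_singleton] at hab ⊢
  obtain ⟨t, ht, hab⟩ := hab
  rcases eq_or_ne a 0 with rfl | ha0
  · exact ⟨0, le_rfl, (zero_smul _ _).symm⟩
  rcases eq_or_ne b 0 with rfl | hb0
  · exact ⟨t, ht, by simpa using hab⟩
  have hα := he a ha ha0
  have hβ := he b hb hb0
  have htαβ : t = ⟪e, a⟫ + ⟪e, b⟫ := by
    simpa [hx.1.2.out, inner_add_right, real_inner_smul_right] using (congrArg (⟪e, ·⟫) hab).symm
  have htpos : 0 < t := htαβ ▸ add_pos hα hβ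
  -- `x = t⁻¹ • (a + b)` lies strictly between the base points on the rays of `a` and `b`.
  have hseg : x ∈ openSegment ℝ (⟪e, a⟫⁻¹ • a) (⟪e, b⟫⁻¹ • b) := by
    refine ⟨⟪e, a⟫ / t, ⟪e, b⟫ / t, div_pos hα htpos, div_pos hβ htpos, ?_, ?_⟩
    · rw [← add_div, ← htαβ, div_self htpos.ne']
    · have hcoef : ∀ s : ℝ, s ≠ 0 → s / t * s⁻¹ = t⁻¹ := fun s hs => by field_simp
      rw [smul_smul, smul_smul, hcoef _ hα.ne', hcoef _ hβ.ne', ← smul_add, hab,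
        inv_smul_smul₀ htpos.ne']
  have hax := ((mem_extremePoints.1 hx).2 _ (inv_inner_smul_mem_coneBase ha hα) _
    (inv_inner_smul_mem_coneBase hb hβ) hseg).1
  exact ⟨⟪e, a⟫, hα.le, by rw [← hax, smul_inv_smul₀ hα.ne']⟩

lemma inv_norm_smul_mem_extremalSection (he : ∀ z ∈ C, z ≠ 0 → 0 < ⟪e, z⟫) {x : E}
    (hx : x ∈ (coneBase C e).extremePoints ℝ) : ‖x‖⁻¹ • x ∈ extremalSection (C : Set E) := by
  have hx0 := ne_zero_of_mem_coneBase hx.1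
  rw [mem_extremalSection_iff, PointedCone.hull_singleton_smul (inv_pos.2 (norm_pos_iff.2 hx0))]
  exact ⟨norm_smul_inv_norm hx0, (isFaceOf_hull_of_mem_extremePoints he hx).isExtreme⟩

theorem inner_nonpos_of_forall_extremalSection [FiniteDimensional ℝ E]
    (hC : (C : Set E) ∩ -C ⊆ {0}) {w : E} (hw : ∀ u ∈ extremalSection (C : Set E), ⟪w, u⟫ ≤ 0)
    {z : E} (hz : z ∈ C) : ⟪w, z⟫ ≤ 0 := by
  obtain ⟨e, c, hc, he⟩ := exists_pos_mul_norm_le_inner hC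
  have hpos : ∀ z ∈ C, z ≠ 0 → 0 < ⟪e, z⟫ := fun z hz hz0 =>
    (mul_pos hc (norm_pos_iff.2 hz0)).trans_le (he z hz)
  have hext : (coneBase C e).extremePoints ℝ ⊆ {y | ⟪w, y⟫ ≤ 0} := fun x hx => by
    have hwx := hw _ (inv_norm_smul_mem_extremalSection hpos hx)
    rw [real_inner_smul_right] at hwx
    exact nonpos_of_mul_nonpos_right hwx
      (inv_pos.2 (norm_pos_iff.2 (ne_zero_of_mem_coneBase hx.1)))
  have hbase : coneBase C e ⊆ {y | ⟪w, y⟫ ≤ 0} := by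
    rw [← closure_convexHull_extremePoints (isCompact_coneBase C.isClosed hc he)
      (convex_coneBase C.convex e)]
    exact closure_minimal (convexHull_min hext (convex_halfSpace_le (innerₛₗ ℝ w).isLinear 0))
      (isClosed_le (continuous_const.inner continuous_id) continuous_const)
  rcases eq_or_ne z 0 with rfl | hz0
  · simp
  have hez := hpos z hz hz0
  have hwz := (hbase (inv_inner_smul_mem_coneBase hz hez)).out
  rw [real_inner_smul_right] at hwz
  exact nonpos_of_mul_nonpos_right hwz (inv_pos.2 hez)

end ProperCone

theorem stmt9_general {n : ℕ} (K : Set (EuclideanSpace ℝ (Fin n)))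
    (hclosed : IsClosed K) (hconv : Convex ℝ K)
    (hcone : ∀ t : ℝ, 0 ≤ t → ∀ x ∈ K, t • x ∈ K)
    (hpointed : K ∩ (-K) ⊆ {0})
    (h0 : (0 : EuclideanSpace ℝ (Fin n)) ∉
      closure (affineSpan ℝ (extremalSection K) : Set (EuclideanSpace ℝ (Fin n))))
    (d : EuclideanSpace ℝ (Fin n)) (hd : IsCircumcentricDir K d) :
    d ≠ 0 ∧ (∀ u ∈ extremalSection K, ⟪d, u⟫ = -‖d‖ ^ 2) ∧
    ∀ v : EuclideanSpace ℝ (Fin n), ‖v‖ ≤ ‖d‖ ^ 2 → ∀ z ∈ K, ⟪d + v, z⟫ ≤ 0 := by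
  obtain ⟨hd_mem, hd_orth⟩ := hd
  have hd0 : d ≠ 0 := by
    rintro rfl
    exact h0 (by simpa using hd_mem)
  have hdu : ∀ u ∈ extremalSection K, ⟪d, u⟫ = -‖d‖ ^ 2 := fun u hu => by
    have h := hd_orth u (subset_closure (subset_affineSpan ℝ _ hu))
    rw [inner_add_left, real_inner_self_eq_norm_sq, real_inner_comm] at h
    linarith
  refine ⟨hd0, hdu, fun v hv z hz => ?_⟩
  obtain ⟨C, rfl⟩ := ProperCone.exists_coe_eq ⟨z, hz⟩ hclosed hconv hcone
  refine ProperCone.inner_nonpos_of_forall_extremalSection hpointed (fun u hu => ?_) hz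
  calc ⟪d + v, u⟫ = -‖d‖ ^ 2 + ⟪v, u⟫ := by rw [inner_add_left, hdu u hu]
    _ ≤ -‖d‖ ^ 2 + ‖v‖ := by
      gcongr
      simpa [hu.1] using real_inner_le_norm v u
    _ ≤ 0 := by linarith

theorem stmt9 {n : ℕ} (K : Set (EuclideanSpace ℝ (Fin n)))
    (hclosed : IsClosed K) (hconv : Convex ℝ K)
    (hcone : ∀ t : ℝ, 0 ≤ t → ∀ x ∈ K, t • x ∈ K)
    (hpointed : K ∩ (-K) ⊆ {0}) (hnontriv : K ≠ {0})
    (h0 : (0 : EuclideanSpace ℝ (Fin n)) ∉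
      closure (affineSpan ℝ (extremalSection K) : Set (EuclideanSpace ℝ (Fin n))))
    (d : EuclideanSpace ℝ (Fin n)) (hd : IsCircumcentricDir K d) :
    d ≠ 0 ∧ (∀ u ∈ extremalSection K, ⟪d, u⟫ = -‖d‖ ^ 2) ∧
    ∀ v : EuclideanSpace ℝ (Fin n), ‖v‖ ≤ ‖d‖ ^ 2 → ∀ z ∈ K, ⟪d + v, z⟫ ≤ 0 :=
  stmt9_general K hclosed hconv hcone hpointed h0 d hd
end

section
/- In the setting of the sharp non-polyhedral theorem (K pointed closed convex cone, 0 ∉ closure(aff(E_K)), d = -proj_{closure(aff(E_K))}(0), P_K = {v : d+v ∈ K°}), the boundary contact set ∂B̄(0,‖d‖²) ∩ ∂P_K equals ‖d‖² · closure(E_K), the homothetic image of closure(E_K) at scale ‖d‖². -/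
/-!
Since `⟪d, u⟫ = -‖d‖²` on `E_K` and `K` is the closed cone over `E_K`, the set
`P_K = {v | d + v ∈ K°}` is the intersection of half-spaces `{v | ∀ u ∈ E_K, ⟪v, u⟫ ≤ ‖d‖²}`.
For a set `S` of unit vectors and `r > 0`, a point `v` of the sphere of radius `r` lies on the
boundary of `{v | ∀ u ∈ S, ⟪v, u⟫ ≤ r}` exactly when `sup_{u ∈ S} ⟪v, u⟫ = r`, i.e. when there are
`u ∈ S` with `⟪v / r, u⟫` arbitrarily close to `1 = ‖v / r‖ ‖u‖`; for unit vectors this means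
`‖v / r - u‖` is arbitrarily small, so `v / r ∈ closure S`.
-/

open scoped RealInnerProductSpace Pointwise

open Metric Set

section InnerLevelSet

variable {E : Type*} [NormedAddCommGroup E] [InnerProductSpace ℝ E] {S : Set E} {r : ℝ}

theorem isClosed_setOf_forall_inner_le (S : Set E) (r : ℝ) :
    IsClosed {v : E | ∀ u ∈ S, ⟪v, u⟫ ≤ r} := by
  simp only [ofPred_forall]
  exact isClosed_biInter fun u _ => isClosed_le (continuous_id.inner continuous_const)
    continuous_const

theorem ball_subset_setOf_forall_inner_le (hS : ∀ u ∈ S, ‖u‖ = 1) {v : E} {ε : ℝ}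
    (hv : ∀ u ∈ S, ⟪v, u⟫ ≤ r - ε) : ball v ε ⊆ {w | ∀ u ∈ S, ⟪w, u⟫ ≤ r} := by
  intro w hw u hu
  have hcs : ⟪w - v, u⟫ ≤ ‖w - v‖ := by
    simpa [hS u hu] using real_inner_le_norm (w - v) u
  rw [mem_ball, dist_eq_norm] at hw
  linarith [inner_sub_left (𝕜 := ℝ) w v u, hv u hu]

theorem mem_closure_of_forall_exists_inner_gt (hS : ∀ u ∈ S, ‖u‖ = 1) {a : E} (ha : ‖a‖ = 1)
    (h : ∀ ε > 0, ∃ u ∈ S, 1 - ε < ⟪a, u⟫) : a ∈ closure S := by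
  refine Metric.mem_closure_iff.2 fun ε hε => ?_
  obtain ⟨u, hu, hau⟩ := h (ε ^ 2 / 2) (by positivity)
  refine ⟨u, hu, lt_of_pow_lt_pow_left₀ 2 hε.le ?_⟩
  rw [dist_eq_norm, norm_sub_sq_real, ha, hS u hu]
  linarith

theorem mem_smul_closure_of_notMem_interior (hS : ∀ u ∈ S, ‖u‖ = 1) (hr : 0 < r) {v : E}
    (hv : ‖v‖ = r) (hvi : v ∉ interior {w | ∀ u ∈ S, ⟪w, u⟫ ≤ r}) : v ∈ r • closure S := by
  have hnear : ∀ ε > 0, ∃ u ∈ S, 1 - ε < ⟪r⁻¹ • v, u⟫ := by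
    intro ε hε
    by_contra! hfar
    refine hvi (mem_interior.2 ⟨ball v (r * ε), ball_subset_setOf_forall_inner_le hS
      fun u hu => ?_, isOpen_ball, mem_ball_self (by positivity)⟩)
    have h := mul_le_mul_of_nonneg_left (hfar u hu) hr.le
    rwa [real_inner_smul_left, ← mul_assoc, mul_inv_cancel₀ hr.ne', one_mul, mul_sub,
      mul_one] at h
  have hunit : ‖r⁻¹ • v‖ = 1 := by
    rw [norm_smul, hv, norm_inv, Real.norm_of_nonneg hr.le, inv_mul_cancel₀ hr.ne']
  exact ⟨r⁻¹ • v, mem_closure_of_forall_exists_inner_gt hS hunit hnear, smul_inv_smul₀ hr.ne' v⟩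

theorem smul_mem_frontier_setOf_forall_inner_le (hS : ∀ u ∈ S, ‖u‖ = 1) (hr : 0 < r) {u : E}
    (hu : u ∈ S) : r • u ∈ frontier {w | ∀ u ∈ S, ⟪w, u⟫ ≤ r} := by
  rw [(isClosed_setOf_forall_inner_le S r).frontier_eq]
  refine ⟨fun u' hu' => ?_, fun hint => ?_⟩
  · have hcs := real_inner_le_norm u u'
    rw [hS u hu, hS u' hu', one_mul] at hcs
    rw [real_inner_smul_left]
    nlinarith
  · obtain ⟨ε, hε, hball⟩ := Metric.mem_nhds_iff.1 (mem_interior_iff_mem_nhds.1 hint)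
    have hout : (r + ε / 2) • u ∈ ball (r • u) ε := by
      rw [mem_ball, dist_eq_norm, ← sub_smul, norm_smul, hS u hu, mul_one, add_sub_cancel_left,
        Real.norm_of_nonneg (by positivity)]
      linarith
    have h := hball hout u hu
    rw [real_inner_smul_left, real_inner_self_eq_norm_sq, hS u hu] at h
    linarith

theorem sphere_inter_frontier_setOf_forall_inner_le (hS : ∀ u ∈ S, ‖u‖ = 1) (hr : 0 < r) :
    sphere 0 r ∩ frontier {w | ∀ u ∈ S, ⟪w, u⟫ ≤ r} = r • closure S := by
  refine Subset.antisymm (fun v ⟨hv, hvf⟩ => ?_) ?_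
  · exact mem_smul_closure_of_notMem_interior hS hr (by simpa using hv) hvf.2
  · rw [← closure_smul₀]
    refine closure_minimal ?_ (isClosed_sphere.inter isClosed_frontier)
    rintro _ ⟨u, hu, rfl⟩
    exact ⟨by simp [norm_smul, hS u hu, abs_of_pos hr],
      smul_mem_frontier_setOf_forall_inner_le hS hr hu⟩

theorem inner_nonpos_of_mem_closure_cone {w z : E} (hw : ∀ u ∈ S, ⟪w, u⟫ ≤ 0)
    (hz : z ∈ closure {x | ∃ t : ℝ, 0 ≤ t ∧ ∃ u ∈ S, x = t • u}) : ⟪w, z⟫ ≤ 0 := by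
  have hH : IsClosed {z : E | ⟪w, z⟫ ≤ 0} := isClosed_le (by fun_prop) continuous_const
  refine closure_minimal ?_ hH hz
  rintro _ ⟨t, ht, u, hu, rfl⟩
  show ⟪w, t • u⟫ ≤ 0
  rw [real_inner_smul_right]
  exact mul_nonpos_of_nonneg_of_nonpos ht (hw u hu)

end InnerLevelSet

section Circumcentric

variable {E : Type*} [NormedAddCommGroup E] [InnerProductSpace ℝ E] {K : Set E} {d : E}

theorem extremalSection_subset (K : Set E) : extremalSection K ⊆ K :=
  fun u hu => hu.2.1 ⟨1, zero_le_one, (one_smul ℝ u).symm⟩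

theorem IsCircumcentricDir.inner_eq (hd : IsCircumcentricDir K d) {u : E}
    (hu : u ∈ extremalSection K) : ⟪d, u⟫ = -‖d‖ ^ 2 := by
  have h := hd.2 u (subset_closure (subset_affineSpan ℝ _ hu))
  rw [inner_add_left, real_inner_self_eq_norm_sq, real_inner_comm] at h
  linarith

theorem IsCircumcentricDir.ne_zero (hd : IsCircumcentricDir K d)
    (h0 : (0 : E) ∉ closure (affineSpan ℝ (extremalSection K) : Set E)) : d ≠ 0 := by
  rintro rfl
  exact h0 (by simpa using hd.1)

theorem IsCircumcentricDir.setOf_forall_inner_add_nonpos (hd : IsCircumcentricDir K d)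
    (hKE : K = closure {x | ∃ t : ℝ, 0 ≤ t ∧ ∃ u ∈ extremalSection K, x = t • u}) :
    {v | ∀ z ∈ K, ⟪d + v, z⟫ ≤ 0} = {v | ∀ u ∈ extremalSection K, ⟪v, u⟫ ≤ ‖d‖ ^ 2} := by
  ext v
  refine ⟨fun hv u hu => ?_, fun hv z hz => ?_⟩
  · have h := hv u (extremalSection_subset K hu)
    rw [inner_add_left, hd.inner_eq hu] at h
    linarith
  · rw [hKE] at hz
    refine inner_nonpos_of_mem_closure_cone (fun u hu => ?_) hz
    rw [inner_add_left, hd.inner_eq hu]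
    linarith [hv u hu]

end Circumcentric

theorem stmt11_general {n : ℕ} (K : Set (EuclideanSpace ℝ (Fin n)))
    (h0 : (0 : EuclideanSpace ℝ (Fin n)) ∉
      closure (affineSpan ℝ (extremalSection K) : Set (EuclideanSpace ℝ (Fin n))))
    (hKE : K = closure {x | ∃ t : ℝ, 0 ≤ t ∧ ∃ u ∈ extremalSection K, x = t • u})
    (d : EuclideanSpace ℝ (Fin n)) (hd : IsCircumcentricDir K d) :
    frontier (Metric.closedBall (0 : EuclideanSpace ℝ (Fin n)) (‖d‖ ^ 2)) ∩
      frontier {v : EuclideanSpace ℝ (Fin n) | ∀ z ∈ K, ⟪d + v, z⟫ ≤ 0} =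
      (‖d‖ ^ 2) • closure (extremalSection K) := by
  have hr : 0 < ‖d‖ ^ 2 := by
    have := norm_pos_iff.2 (hd.ne_zero h0)
    positivity
  rw [frontier_closedBall 0 hr.ne', hd.setOf_forall_inner_add_nonpos hKE]
  exact sphere_inter_frontier_setOf_forall_inner_le (fun u hu => hu.1) hr

theorem stmt11 {n : ℕ} (K : Set (EuclideanSpace ℝ (Fin n)))
    (hclosed : IsClosed K) (hconv : Convex ℝ K)
    (hcone : ∀ t : ℝ, 0 ≤ t → ∀ x ∈ K, t • x ∈ K)
    (hpointed : K ∩ (-K) ⊆ {0}) (hnontriv : K ≠ {0})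
    (h0 : (0 : EuclideanSpace ℝ (Fin n)) ∉
      closure (affineSpan ℝ (extremalSection K) : Set (EuclideanSpace ℝ (Fin n))))
    (hKE : K = closure {x | ∃ t : ℝ, 0 ≤ t ∧ ∃ u ∈ extremalSection K, x = t • u})
    (d : EuclideanSpace ℝ (Fin n)) (hd : IsCircumcentricDir K d) :
    frontier (Metric.closedBall (0 : EuclideanSpace ℝ (Fin n)) (‖d‖ ^ 2)) ∩
      frontier {v : EuclideanSpace ℝ (Fin n) | ∀ z ∈ K, ⟪d + v, z⟫ ≤ 0} =
      (‖d‖ ^ 2) • closure (extremalSection K) :=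
  stmt11_general K h0 hKE d hd
end

section
/- Let K₁ ⊂ R^{n₁} and K₂ ⊂ R^{n₂} be pointed closed convex cones with circumcentric directions d₁, d₂ (negatives of projections of the origin onto the closed affine hulls of their unit extreme-ray sets), both nonzero, with δ₁ = ‖d₁‖², δ₂ = ‖d₂‖². Then the circumcentric direction of K₁ × K₂ is d = (δ₂/(δ₁+δ₂) · d₁, δ₁/(δ₁+δ₂) · d₂) and satisfies 1/‖d‖² = 1/δ₁ + 1/δ₂. -/
open scoped RealInnerProductSpace

/-!
The extremal section of `K₁ × K₂` is `(E₁ × 0) ∪ (0 × E₂)`: pointedness makes `K₁ × 0` and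
`0 × K₂` faces of the product, and a unit vector with both components nonzero is the midpoint of
points of these two faces that are not on its ray. A direction `d` is circumcentric iff `-d` lies
in the closed affine hull and `⟪d, u⟫ = -‖d‖²` on the extremal section. For
`d = (α d₁, (1 - α) d₂)` these inner products are `-α δ₁` on the first piece and `-(1 - α) δ₂` on
the second, while `‖d‖² = α² δ₁ + (1 - α)² δ₂`; all three agree exactly when
`α δ₁ = (1 - α) δ₂`, i.e. `α = δ₂ / (δ₁ + δ₂)`, and then `‖d‖² = δ₁ δ₂ / (δ₁ + δ₂)`. Since
`-d = α (-d₁, 0) + (1 - α) (0, -d₂)` is an affine combination of points of the closed affine hull,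
uniqueness of the circumcentric direction identifies `d`.
-/

open Set WithLp

section Module

variable {V W : Type*} [AddCommGroup V] [Module ℝ V] [AddCommGroup W] [Module ℝ W]

theorem IsExtreme.image_linearEquiv (f : V ≃ₗ[ℝ] W) {A B : Set V} (h : IsExtreme ℝ A B) :
    IsExtreme ℝ (f '' A) (f '' B) := by
  refine ⟨image_mono h.subset, ?_⟩
  rintro _ ⟨x, hx, rfl⟩ _ ⟨y, hy, rfl⟩ _ ⟨z, hz, rfl⟩ hseg
  rw [← show f '' openSegment ℝ x y = openSegment ℝ (f x) (f y) from
    image_openSegment ℝ (f : V →ₗ[ℝ] W).toAffineMap x y] at hseg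
  obtain ⟨w, hw, hwz⟩ := hseg
  exact mem_image_of_mem f (h.left_mem_of_mem_openSegment hx hy hz (f.injective hwz ▸ hw))

theorem eq_zero_of_smul_add_smul_eq_zero {K : Set V}
    (hcone : ∀ t : ℝ, 0 ≤ t → ∀ x ∈ K, t • x ∈ K) (hpointed : K ∩ -K ⊆ {0})
    {x y : V} (hx : x ∈ K) (hy : y ∈ K) {a b : ℝ} (ha : 0 < a) (hb : 0 ≤ b)
    (h : a • x + b • y = 0) : x = 0 := by
  have hnegx : -x = (b / a) • y := by
    apply smul_right_injective V ha.ne'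
    change a • -x = a • ((b / a) • y)
    rw [smul_neg, smul_smul, mul_div_cancel₀ b ha.ne', neg_eq_iff_add_eq_zero]
    exact h
  exact hpointed ⟨hx, by rw [mem_neg, hnegx]; exact hcone _ (by positivity) y hy⟩

theorem ContinuousLinearMap.mapsTo_closure_affineSpan [TopologicalSpace V] [TopologicalSpace W]
    (f : V →L[ℝ] W) {s : Set V} {t : Set W} (h : MapsTo f s t) :
    MapsTo f (closure (affineSpan ℝ s : Set V)) (closure (affineSpan ℝ t : Set W)) := by
  refine MapsTo.closure (fun x hx => ?_) f.continuous
  have : f x ∈ (affineSpan ℝ s).map (f : V →ₗ[ℝ] W).toAffineMap := ⟨x, hx, rfl⟩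
  rw [AffineSubspace.map_span] at this
  exact affineSpan_mono ℝ h.image_subset this

theorem smul_add_smul_mem_closure_affineSpan [TopologicalSpace V] [ContinuousAdd V]
    [ContinuousConstSMul ℝ V] {s : Set V} {p q : V}
    (hp : p ∈ closure (affineSpan ℝ s : Set V)) (hq : q ∈ closure (affineSpan ℝ s : Set V))
    {a b : ℝ} (hab : a + b = 1) : a • p + b • q ∈ closure (affineSpan ℝ s : Set V) := by
  refine map_mem_closure₂ (f := fun x y => a • x + b • y) (by fun_prop) hp hq fun x hx y hy => ?_
  have := AffineMap.lineMap_mem a (SetLike.mem_coe.1 hy) (SetLike.mem_coe.1 hx)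
  rwa [AffineMap.lineMap_apply_module, ← eq_sub_of_add_eq' hab, add_comm] at this

end Module

variable {E F G : Type*} [NormedAddCommGroup E] [InnerProductSpace ℝ E]
  [NormedAddCommGroup F] [InnerProductSpace ℝ F] [NormedAddCommGroup G] [InnerProductSpace ℝ G]

theorem IsCircumcentricDir.unique {K : Set E} {d d' : E} (h : IsCircumcentricDir K d)
    (h' : IsCircumcentricDir K d') : d = d' := by
  have h₁ : ⟪d - d', d⟫ = 0 := by simpa only [neg_add_eq_sub] using h.2 (-d') h'.1
  have h₂ : ⟪d - d', d'⟫ = 0 := by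
    simpa only [neg_add_eq_sub, ← neg_sub d, inner_neg_left, neg_eq_zero] using h'.2 (-d) h.1
  rw [← sub_eq_zero, ← inner_self_eq_zero (𝕜 := ℝ), inner_sub_right, h₁, h₂, sub_zero]

theorem IsCircumcentricDir.zero_mem {K : Set E} {d : E} (h : IsCircumcentricDir K d) :
    (0 : E) ∈ K := by
  obtain ⟨u, -, hu⟩ : (extremalSection K).Nonempty := by
    by_contra! hK
    simpa [hK] using h.1
  exact hu.subset ⟨0, le_rfl, (zero_smul ℝ u).symm⟩

theorem inner_eq_of_mem_closure_affineSpan {s : Set E} {v : E} {c : ℝ}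
    (h : ∀ u ∈ s, ⟪v, u⟫ = c) {x : E} (hx : x ∈ closure (affineSpan ℝ s : Set E)) :
    ⟪v, x⟫ = c := by
  have hspan : EqOn (innerSL ℝ v : E →ₗ[ℝ] ℝ).toAffineMap (AffineMap.const ℝ E c)
      (affineSpan ℝ s) := AffineMap.eqOn_affineSpan h
  exact hspan.closure (innerSL ℝ v).continuous continuous_const hx

theorem isCircumcentricDir_iff {K : Set E} {d : E} :
    IsCircumcentricDir K d ↔ -d ∈ closure (affineSpan ℝ (extremalSection K) : Set E) ∧
      ∀ u ∈ extremalSection K, ⟪d, u⟫ = -‖d‖ ^ 2 := by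
  have key (x : E) : ⟪x + d, d⟫ = 0 ↔ ⟪d, x⟫ = -‖d‖ ^ 2 := by
    rw [inner_add_left, real_inner_self_eq_norm_sq, real_inner_comm]
    constructor <;> intro <;> linarith
  refine and_congr_right fun _ => ⟨fun h u hu => ?_, fun h x hx => ?_⟩
  · exact (key u).1 (h u (subset_closure (subset_affineSpan ℝ _ hu)))
  · exact (key x).2 (inner_eq_of_mem_closure_affineSpan h hx)

theorem image_extremalSection_subset (L : E ≃ₗᵢ[ℝ] G) (K : Set E) :
    L '' extremalSection K ⊆ extremalSection (L '' K) := by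
  rintro _ ⟨u, ⟨hnorm, hext⟩, rfl⟩
  refine ⟨by rw [L.norm_map, hnorm], ?_⟩
  have hray : L '' {x | ∃ t : ℝ, 0 ≤ t ∧ x = t • u} = {x | ∃ t : ℝ, 0 ≤ t ∧ x = t • L u} := by
    ext x
    constructor
    · rintro ⟨_, ⟨t, ht, rfl⟩, rfl⟩
      exact ⟨t, ht, L.map_smul t u⟩
    · rintro ⟨t, ht, rfl⟩
      exact ⟨t • u, ⟨t, ht, rfl⟩, L.map_smul t u⟩
  rw [← hray]
  exact hext.image_linearEquiv L.toLinearEquiv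

theorem extremalSection_image (L : E ≃ₗᵢ[ℝ] G) (K : Set E) :
    extremalSection (L '' K) = L '' extremalSection K := by
  refine subset_antisymm (fun x hx => ⟨L.symm x, ?_, L.apply_symm_apply x⟩)
    (image_extremalSection_subset L K)
  have := image_extremalSection_subset L.symm (L '' K)
  have hK : L.symm '' (L '' K) = K := L.toEquiv.symm_image_image K
  rw [hK] at this
  exact this (mem_image_of_mem _ hx)

@[ext]
theorem WithLp.prod_ext {p : ENNReal} {α β : Type*} [AddCommGroup α] [AddCommGroup β]
    {x y : WithLp p (α × β)} (h₁ : x.fst = y.fst) (h₂ : x.snd = y.snd) :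
    x = y :=
  WithLp.ofLp_injective p (Prod.ext h₁ h₂)

def prodSet (K₁ : Set E) (K₂ : Set F) : Set (WithLp 2 (E × F)) :=
  {q | q.fst ∈ K₁ ∧ q.snd ∈ K₂}

theorem image_withLpProdComm_prodSet (K₁ : Set E) (K₂ : Set F) :
    LinearIsometryEquiv.withLpProdComm 2 ℝ E F '' prodSet K₁ K₂ = prodSet K₂ K₁ := by
  ext q
  constructor
  · rintro ⟨q, hq, rfl⟩
    exact ⟨hq.2, hq.1⟩
  · intro hq
    exact ⟨toLp 2 (q.snd, q.fst), ⟨hq.2, hq.1⟩, rfl⟩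

section ProdSet

variable {K₁ : Set E} {K₂ : Set F}

theorem isExtreme_prodSet_image_inl_iff (hcone₂ : ∀ t : ℝ, 0 ≤ t → ∀ x ∈ K₂, t • x ∈ K₂)
    (hpointed₂ : K₂ ∩ -K₂ ⊆ {0}) (h0₂ : (0 : F) ∈ K₂) {B : Set E} :
    IsExtreme ℝ (prodSet K₁ K₂) ((fun x => toLp 2 (x, (0 : F))) '' B) ↔ IsExtreme ℝ K₁ B := by
  constructor
  · intro h
    refine ⟨fun z hz => (h.subset ⟨z, hz, rfl⟩).1, fun x hx y hy z hz hseg => ?_⟩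
    obtain ⟨a, b, ha, hb, hab, hxy⟩ := hseg
    obtain ⟨x', hx', hxx'⟩ := h.left_mem_of_mem_openSegment (x := toLp 2 (x, 0))
      ⟨hx, h0₂⟩ (y := toLp 2 (y, 0)) ⟨hy, h0₂⟩ ⟨z, hz, rfl⟩
      ⟨a, b, ha, hb, hab, by ext <;> simp [← hxy]⟩
    have hx'x : x' = x := congrArg WithLp.fst hxx'
    exact hx'x ▸ hx'
  · intro h
    refine ⟨?_, ?_⟩
    · rintro _ ⟨z, hz, rfl⟩
      exact ⟨h.subset hz, h0₂⟩
    · rintro x hx y hy _ ⟨z, hz, rfl⟩ ⟨a, b, ha, hb, hab, hxy⟩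
      have h₁ : a • x.fst + b • y.fst = z := by simpa using congrArg WithLp.fst hxy
      have h₂ : a • x.snd + b • y.snd = 0 := by simpa using congrArg WithLp.snd hxy
      have hx₂ : x.snd = 0 :=
        eq_zero_of_smul_add_smul_eq_zero hcone₂ hpointed₂ hx.2 hy.2 ha hb.le h₂
      exact ⟨x.fst, h.left_mem_of_mem_openSegment hx.1 hy.1 hz ⟨a, b, ha, hb, hab, h₁⟩,
        by ext <;> simp [hx₂]⟩

theorem toLp_inl_mem_extremalSection_prodSet_iff
    (hcone₂ : ∀ t : ℝ, 0 ≤ t → ∀ x ∈ K₂, t • x ∈ K₂) (hpointed₂ : K₂ ∩ -K₂ ⊆ {0})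
    (h0₂ : (0 : F) ∈ K₂) {u : E} :
    toLp 2 (u, (0 : F)) ∈ extremalSection (prodSet K₁ K₂) ↔ u ∈ extremalSection K₁ := by
  have hray : {x | ∃ t : ℝ, 0 ≤ t ∧ x = t • toLp 2 (u, (0 : F))} =
      (fun x => toLp 2 (x, (0 : F))) '' {x | ∃ t : ℝ, 0 ≤ t ∧ x = t • u} := by
    ext x
    constructor
    · rintro ⟨t, ht, rfl⟩
      exact ⟨t • u, ⟨t, ht, rfl⟩, by ext <;> simp⟩
    · rintro ⟨_, ⟨t, ht, rfl⟩, rfl⟩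
      exact ⟨t, ht, by ext <;> simp⟩
  simp only [extremalSection, mem_ofPred_eq, norm_toLp_fst, hray,
    isExtreme_prodSet_image_inl_iff hcone₂ hpointed₂ h0₂]

theorem toLp_inr_mem_extremalSection_prodSet_iff
    (hcone₁ : ∀ t : ℝ, 0 ≤ t → ∀ x ∈ K₁, t • x ∈ K₁) (hpointed₁ : K₁ ∩ -K₁ ⊆ {0})
    (h0₁ : (0 : E) ∈ K₁) {v : F} :
    toLp 2 ((0 : E), v) ∈ extremalSection (prodSet K₁ K₂) ↔ v ∈ extremalSection K₂ := by
  let σ := LinearIsometryEquiv.withLpProdComm 2 ℝ F E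
  rw [← image_withLpProdComm_prodSet, extremalSection_image,
    show toLp 2 ((0 : E), v) = σ (toLp 2 (v, 0)) from rfl, σ.injective.mem_set_image,
    toLp_inl_mem_extremalSection_prodSet_iff hcone₁ hpointed₁ h0₁]

theorem fst_eq_zero_or_snd_eq_zero_of_mem_extremalSection
    (hcone₁ : ∀ t : ℝ, 0 ≤ t → ∀ x ∈ K₁, t • x ∈ K₁) (h0₁ : (0 : E) ∈ K₁)
    (hcone₂ : ∀ t : ℝ, 0 ≤ t → ∀ x ∈ K₂, t • x ∈ K₂) (h0₂ : (0 : F) ∈ K₂)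
    {w : WithLp 2 (E × F)} (hw : w ∈ extremalSection (prodSet K₁ K₂)) :
    w.fst = 0 ∨ w.snd = 0 := by
  by_contra! hne
  have hw_ray : w ∈ {x | ∃ t : ℝ, 0 ≤ t ∧ x = t • w} := ⟨1, zero_le_one, (one_smul ℝ w).symm⟩
  have hwK : w ∈ prodSet K₁ K₂ := hw.2.subset hw_ray
  -- `w` is the midpoint of `(2 w₁, 0)` and `(0, 2 w₂)`, so `(2 w₁, 0)` lies on the ray of `w`
  obtain ⟨t, -, ht⟩ := hw.2.left_mem_of_mem_openSegment (x := toLp 2 ((2 : ℝ) • w.fst, 0))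
    ⟨hcone₁ 2 zero_le_two _ hwK.1, h0₂⟩ (y := toLp 2 (0, (2 : ℝ) • w.snd))
    ⟨h0₁, hcone₂ 2 zero_le_two _ hwK.2⟩ hw_ray
    ⟨1 / 2, 1 / 2, by norm_num, by norm_num, by norm_num, by ext <;> simp [smul_smul]⟩
  have h₂ : t • w.snd = 0 := by simpa using (congrArg WithLp.snd ht).symm
  have h₁ : (2 : ℝ) • w.fst = t • w.fst := by simpa using congrArg WithLp.fst ht
  rw [(smul_eq_zero.1 h₂).resolve_right hne.2, zero_smul, smul_eq_zero] at h₁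
  exact hne.1 (h₁.resolve_left two_ne_zero)

theorem extremalSection_prodSet
    (hcone₁ : ∀ t : ℝ, 0 ≤ t → ∀ x ∈ K₁, t • x ∈ K₁) (hpointed₁ : K₁ ∩ -K₁ ⊆ {0})
    (h0₁ : (0 : E) ∈ K₁)
    (hcone₂ : ∀ t : ℝ, 0 ≤ t → ∀ x ∈ K₂, t • x ∈ K₂) (hpointed₂ : K₂ ∩ -K₂ ⊆ {0})
    (h0₂ : (0 : F) ∈ K₂) :
    extremalSection (prodSet K₁ K₂) =
      (fun u => toLp 2 (u, (0 : F))) '' extremalSection K₁ ∪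
        (fun v => toLp 2 ((0 : E), v)) '' extremalSection K₂ := by
  ext w
  constructor
  · intro hw
    rcases fst_eq_zero_or_snd_eq_zero_of_mem_extremalSection hcone₁ h0₁ hcone₂ h0₂ hw with h | h
    · have hw' : toLp 2 ((0 : E), w.snd) = w := by ext <;> simp [h]
      rw [← hw', toLp_inr_mem_extremalSection_prodSet_iff hcone₁ hpointed₁ h0₁] at hw
      exact Or.inr ⟨w.snd, hw, hw'⟩
    · have hw' : toLp 2 (w.fst, (0 : F)) = w := by ext <;> simp [h]
      rw [← hw', toLp_inl_mem_extremalSection_prodSet_iff hcone₂ hpointed₂ h0₂] at hw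
      exact Or.inl ⟨w.fst, hw, hw'⟩
  · rintro (⟨u, hu, rfl⟩ | ⟨v, hv, rfl⟩)
    · exact (toLp_inl_mem_extremalSection_prodSet_iff hcone₂ hpointed₂ h0₂).2 hu
    · exact (toLp_inr_mem_extremalSection_prodSet_iff hcone₁ hpointed₁ h0₁).2 hv

end ProdSet

theorem norm_sq_toLp_smul_smul (α : ℝ) (x : E) (y : F) :
    ‖toLp 2 (α • x, (1 - α) • y)‖ ^ 2 = α ^ 2 * ‖x‖ ^ 2 + (1 - α) ^ 2 * ‖y‖ ^ 2 := by
  rw [prod_norm_sq_eq_of_L2]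
  simp [norm_smul, mul_pow]

theorem isCircumcentricDir_prodSet {K₁ : Set E} {K₂ : Set F}
    (hcone₁ : ∀ t : ℝ, 0 ≤ t → ∀ x ∈ K₁, t • x ∈ K₁) (hpointed₁ : K₁ ∩ -K₁ ⊆ {0})
    (hcone₂ : ∀ t : ℝ, 0 ≤ t → ∀ x ∈ K₂, t • x ∈ K₂) (hpointed₂ : K₂ ∩ -K₂ ⊆ {0})
    {d₁ : E} {d₂ : F} (h₁ : IsCircumcentricDir K₁ d₁) (h₂ : IsCircumcentricDir K₂ d₂)
    {α : ℝ} (hα : α * ‖d₁‖ ^ 2 = (1 - α) * ‖d₂‖ ^ 2) :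
    IsCircumcentricDir (prodSet K₁ K₂) (toLp 2 (α • d₁, (1 - α) • d₂)) := by
  have hS := extremalSection_prodSet hcone₁ hpointed₁ h₁.zero_mem hcone₂ hpointed₂ h₂.zero_mem
  have hnorm := norm_sq_toLp_smul_smul α d₁ d₂
  rw [isCircumcentricDir_iff] at h₁ h₂ ⊢
  constructor
  · have hinl := ((prodContinuousLinearEquiv 2 ℝ E F).symm.toContinuousLinearMap ∘L
      ContinuousLinearMap.inl ℝ E F).mapsTo_closure_affineSpan
      (t := extremalSection (prodSet K₁ K₂)) (fun u hu => hS ▸ Or.inl (mem_image_of_mem _ hu))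
    have hinr := ((prodContinuousLinearEquiv 2 ℝ E F).symm.toContinuousLinearMap ∘L
      ContinuousLinearMap.inr ℝ E F).mapsTo_closure_affineSpan
      (t := extremalSection (prodSet K₁ K₂)) (fun v hv => hS ▸ Or.inr (mem_image_of_mem _ hv))
    convert smul_add_smul_mem_closure_affineSpan (hinl h₁.1) (hinr h₂.1) (add_sub_cancel α 1)
      using 1
    ext <;> simp
  · rw [hS]
    rintro _ (⟨u, hu, rfl⟩ | ⟨v, hv, rfl⟩)
    · simp only [prod_inner_apply, real_inner_smul_left, h₁.2 u hu, inner_zero_right, add_zero,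
        hnorm]
      linear_combination (α - 1) * hα
    · simp only [prod_inner_apply, real_inner_smul_left, h₂.2 v hv, inner_zero_right, zero_add,
        hnorm]
      linear_combination α * hα

theorem stmt16_general {n₁ n₂ : ℕ}
    (K₁ : Set (EuclideanSpace ℝ (Fin n₁))) (K₂ : Set (EuclideanSpace ℝ (Fin n₂)))
    (hcone₁ : ∀ t : ℝ, 0 ≤ t → ∀ x ∈ K₁, t • x ∈ K₁)
    (hpointed₁ : K₁ ∩ (-K₁) ⊆ {0})
    (hcone₂ : ∀ t : ℝ, 0 ≤ t → ∀ x ∈ K₂, t • x ∈ K₂)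
    (hpointed₂ : K₂ ∩ (-K₂) ⊆ {0})
    (d₁ : EuclideanSpace ℝ (Fin n₁)) (d₂ : EuclideanSpace ℝ (Fin n₂))
    (h₁ : IsCircumcentricDir K₁ d₁) (h₂ : IsCircumcentricDir K₂ d₂)
    (hd₁ : d₁ ≠ 0) (hd₂ : d₂ ≠ 0)
    (d : WithLp 2 (EuclideanSpace ℝ (Fin n₁) × EuclideanSpace ℝ (Fin n₂)))
    (hd : IsCircumcentricDir
      {q : WithLp 2 (EuclideanSpace ℝ (Fin n₁) × EuclideanSpace ℝ (Fin n₂)) |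
        (WithLp.equiv 2 (EuclideanSpace ℝ (Fin n₁) × EuclideanSpace ℝ (Fin n₂)) q).1 ∈ K₁ ∧
        (WithLp.equiv 2 (EuclideanSpace ℝ (Fin n₁) × EuclideanSpace ℝ (Fin n₂)) q).2 ∈ K₂} d) :
    d = (WithLp.equiv 2 (EuclideanSpace ℝ (Fin n₁) × EuclideanSpace ℝ (Fin n₂))).symm
        ((‖d₂‖ ^ 2 / (‖d₁‖ ^ 2 + ‖d₂‖ ^ 2)) • d₁, (‖d₁‖ ^ 2 / (‖d₁‖ ^ 2 + ‖d₂‖ ^ 2)) • d₂) ∧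
    1 / ‖d‖ ^ 2 = 1 / ‖d₁‖ ^ 2 + 1 / ‖d₂‖ ^ 2 := by
  have hδ₁ : 0 < ‖d₁‖ ^ 2 := by positivity
  have hδ₂ : 0 < ‖d₂‖ ^ 2 := by positivity
  set α := ‖d₂‖ ^ 2 / (‖d₁‖ ^ 2 + ‖d₂‖ ^ 2) with hα
  have h1α : 1 - α = ‖d₁‖ ^ 2 / (‖d₁‖ ^ 2 + ‖d₂‖ ^ 2) := by
    rw [hα]
    field_simp
    ring
  have hbalance : α * ‖d₁‖ ^ 2 = (1 - α) * ‖d₂‖ ^ 2 := by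
    rw [h1α]
    ring
  obtain rfl : d = toLp 2 (α • d₁, (1 - α) • d₂) :=
    hd.unique (isCircumcentricDir_prodSet hcone₁ hpointed₁ hcone₂ hpointed₂ h₁ h₂ hbalance)
  refine ⟨by rw [h1α]; rfl, ?_⟩
  rw [norm_sq_toLp_smul_smul, h1α, hα]
  field_simp
  ring

theorem stmt16 {n₁ n₂ : ℕ}
    (K₁ : Set (EuclideanSpace ℝ (Fin n₁))) (K₂ : Set (EuclideanSpace ℝ (Fin n₂)))
    (hclosed₁ : IsClosed K₁) (hconv₁ : Convex ℝ K₁)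
    (hcone₁ : ∀ t : ℝ, 0 ≤ t → ∀ x ∈ K₁, t • x ∈ K₁)
    (hpointed₁ : K₁ ∩ (-K₁) ⊆ {0}) (hnontriv₁ : K₁ ≠ {0})
    (hclosed₂ : IsClosed K₂) (hconv₂ : Convex ℝ K₂)
    (hcone₂ : ∀ t : ℝ, 0 ≤ t → ∀ x ∈ K₂, t • x ∈ K₂)
    (hpointed₂ : K₂ ∩ (-K₂) ⊆ {0}) (hnontriv₂ : K₂ ≠ {0})
    (d₁ : EuclideanSpace ℝ (Fin n₁)) (d₂ : EuclideanSpace ℝ (Fin n₂))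
    (h₁ : IsCircumcentricDir K₁ d₁) (h₂ : IsCircumcentricDir K₂ d₂)
    (hd₁ : d₁ ≠ 0) (hd₂ : d₂ ≠ 0)
    (d : WithLp 2 (EuclideanSpace ℝ (Fin n₁) × EuclideanSpace ℝ (Fin n₂)))
    (hd : IsCircumcentricDir
      {q : WithLp 2 (EuclideanSpace ℝ (Fin n₁) × EuclideanSpace ℝ (Fin n₂)) |
        (WithLp.equiv 2 (EuclideanSpace ℝ (Fin n₁) × EuclideanSpace ℝ (Fin n₂)) q).1 ∈ K₁ ∧
        (WithLp.equiv 2 (EuclideanSpace ℝ (Fin n₁) × EuclideanSpace ℝ (Fin n₂)) q).2 ∈ K₂} d) :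
    d = (WithLp.equiv 2 (EuclideanSpace ℝ (Fin n₁) × EuclideanSpace ℝ (Fin n₂))).symm
        ((‖d₂‖ ^ 2 / (‖d₁‖ ^ 2 + ‖d₂‖ ^ 2)) • d₁, (‖d₁‖ ^ 2 / (‖d₁‖ ^ 2 + ‖d₂‖ ^ 2)) • d₂) ∧
    1 / ‖d‖ ^ 2 = 1 / ‖d₁‖ ^ 2 + 1 / ‖d₂‖ ^ 2 :=
  stmt16_general K₁ K₂ hcone₁ hpointed₁ hcone₂ hpointed₂ d₁ d₂ h₁ h₂ hd₁ hd₂ d hd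
end

section
/- Let h : R^n → R be a differentiable strictly convex function with ∇h(0) = 0, let u^1,...,u^p be unit vectors whose affine hull A does not contain 0, and let c_h ∈ A be a minimizer of h over A. Set κ_h = ⟨∇h(c_h), c_h⟩. Then ⟨∇h(c_h), u^i⟩ = κ_h for every i, κ_h > 0, and for d_h := -∇h(c_h), every v with ‖v‖ ≤ κ_h satisfies ⟨d_h + v, u^i⟩ ≤ 0 for all i (hence d_h + v lies in the polar of cone{u^1,...,u^p}). -/
/-!
Along any line `t ↦ x + t • v` the derivative of `h` is `⟪∇h, v⟫`. Minimality of `c` on the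
affine span therefore makes `∇h(c)` orthogonal to every `u i - c`, so all `⟪∇h(c), u i⟫` equal
`κ = ⟪∇h(c), c⟫`. Strict convexity makes `∇h` strictly monotone, and since `∇h(0) = 0` and
`c ≠ 0` (as `0 ∉ A`) this gives `κ > 0`. Finally Cauchy–Schwarz with `‖u i‖ = 1` gives
`⟪v, u i⟫ ≤ ‖v‖ ≤ κ = ⟪∇h(c), u i⟫`.
-/

open scoped RealInnerProductSpace

lemma StrictConvexOn.comp_add_smul {E β : Type*} [AddCommGroup E] [Module ℝ E]
    [AddCommMonoid β] [PartialOrder β] [Module ℝ β] {f : E → β}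
    (hf : StrictConvexOn ℝ Set.univ f) (x : E) {v : E} (hv : v ≠ 0) :
    StrictConvexOn ℝ Set.univ (fun t : ℝ => f (x + t • v)) := by
  refine ⟨convex_univ, fun s _ t _ hst a b ha hb hab => ?_⟩
  have hne : x + s • v ≠ x + t • v := fun heq =>
    hst (smul_left_injective ℝ hv (add_left_cancel heq))
  have key := hf.2 (Set.mem_univ _) (Set.mem_univ _) hne ha hb hab
  have hcomb : a • (x + s • v) + b • (x + t • v) = x + (a • s + b • t) • v := by
    rw [smul_add, smul_add, add_add_add_comm, ← add_smul, hab, one_smul, smul_smul, smul_smul,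
      ← add_smul, smul_eq_mul, smul_eq_mul]
  simpa only [hcomb] using key

section Gradient

variable {E : Type*} [NormedAddCommGroup E] [InnerProductSpace ℝ E] [CompleteSpace E]

lemma HasGradientAt.hasDerivAt_add_smul {f : E → ℝ} {g x v : E} {t : ℝ}
    (hf : HasGradientAt f g (x + t • v)) :
    HasDerivAt (fun s : ℝ => f (x + s • v)) ⟪g, v⟫ t := by
  have hline : HasDerivAt (fun s : ℝ => x + s • v) v t := by
    simpa using ((hasDerivAt_id t).smul_const v).const_add x
  simpa [Function.comp_def] using hf.hasFDerivAt.comp_hasDerivAt t hline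

lemma StrictConvexOn.inner_gradient_sub_pos {f : E → ℝ} (hf : StrictConvexOn ℝ Set.univ f)
    {x y : E} (hx : DifferentiableAt ℝ f x) (hy : DifferentiableAt ℝ f y) (hxy : x ≠ y) :
    0 < ⟪gradient f x - gradient f y, x - y⟫ := by
  have hφ := hf.comp_add_smul y (sub_ne_zero.mpr hxy)
  have hd0 : HasDerivAt (fun t : ℝ => f (y + t • (x - y))) ⟪gradient f y, x - y⟫ 0 :=
    HasGradientAt.hasDerivAt_add_smul (by simpa using hy.hasGradientAt)
  have hd1 : HasDerivAt (fun t : ℝ => f (y + t • (x - y))) ⟪gradient f x, x - y⟫ 1 :=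
    HasGradientAt.hasDerivAt_add_smul (by simpa using hx.hasGradientAt)
  have hlt := (hφ.lt_slope_of_hasDerivAt (Set.mem_univ 0) (Set.mem_univ 1) one_pos hd0).trans
    (hφ.slope_lt_of_hasDerivAt (Set.mem_univ 0) (Set.mem_univ 1) one_pos hd1)
  rw [inner_sub_left]
  linarith

lemma IsMinOn.inner_gradient_sub_eq_zero {f : E → ℝ} {s : AffineSubspace ℝ E} {c x : E}
    (hf : DifferentiableAt ℝ f c) (hmin : IsMinOn f s c) (hc : c ∈ s) (hx : x ∈ s) :
    ⟪gradient f c, x - c⟫ = 0 := by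
  have hder : HasDerivAt (fun t : ℝ => f (c + t • (x - c))) ⟪gradient f c, x - c⟫ 0 :=
    HasGradientAt.hasDerivAt_add_smul (by simpa using hf.hasGradientAt)
  refine IsLocalMin.hasDerivAt_eq_zero (Filter.Eventually.of_forall fun t => ?_) hder
  have hmem : c + t • (x - c) ∈ s := by
    simpa [vsub_eq_sub, vadd_eq_add, add_comm] using s.smul_vsub_vadd_mem t hx hc hc
  simpa using isMinOn_iff.mp hmin _ hmem

end Gradient

theorem stmt18 {n p : ℕ} (h : EuclideanSpace ℝ (Fin n) → ℝ)
    (hdiff : Differentiable ℝ h) (hconv : StrictConvexOn ℝ Set.univ h)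
    (hgrad0 : gradient h 0 = 0)
    (u : Fin p → EuclideanSpace ℝ (Fin n)) (hu : ∀ i, ‖u i‖ = 1)
    (h0 : (0 : EuclideanSpace ℝ (Fin n)) ∉ affineSpan ℝ (Set.range u))
    (c : EuclideanSpace ℝ (Fin n)) (hc : c ∈ affineSpan ℝ (Set.range u))
    (hmin : ∀ x ∈ affineSpan ℝ (Set.range u), h c ≤ h x) :
    (∀ i, ⟪gradient h c, u i⟫ = ⟪gradient h c, c⟫) ∧
    0 < ⟪gradient h c, c⟫ ∧
    ∀ v : EuclideanSpace ℝ (Fin n), ‖v‖ ≤ ⟪gradient h c, c⟫ →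
      ∀ i, ⟪-gradient h c + v, u i⟫ ≤ 0 := by
  have hlevel : ∀ i, ⟪gradient h c, u i⟫ = ⟪gradient h c, c⟫ := fun i => by
    have horth := (isMinOn_iff.mpr hmin).inner_gradient_sub_eq_zero (hdiff c) hc
      (subset_affineSpan ℝ _ ⟨i, rfl⟩)
    rwa [inner_sub_right, sub_eq_zero] at horth
  have hpos : 0 < ⟪gradient h c, c⟫ := by
    have hc0 : c ≠ 0 := fun hc0 => h0 (hc0 ▸ hc)
    simpa [hgrad0] using hconv.inner_gradient_sub_pos (hdiff c) (hdiff 0) hc0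
  refine ⟨hlevel, hpos, fun v hv i => ?_⟩
  have hcs : ⟪v, u i⟫ ≤ ‖v‖ := by simpa [hu i] using real_inner_le_norm v (u i)
  rw [inner_add_left, inner_neg_left, hlevel i]
  linarith
end

section
/- For h_p(x) = (1/p)‖x‖^p with p ≥ 2 on R^n, and unit vectors u^1,...,u^p' with affine hull avoiding 0, let d = -proj_{aff}(0) be the Euclidean circumcentric direction. Then the Bregman direction is d_{h_p} = ‖d‖^{p-2} d, the margin is κ_{h_p} = ‖d‖^p, and every v with ‖v‖ ≤ ‖d‖^p satisfies ‖d‖^{p-2} d + v ∈ K°, where K = cone{u^1,...,u^{p'}}. -/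
/-! Every generator `u i` lies in the affine hull, so orthogonality of the hull to `d` through
`-d` gives `⟪d, u i⟫ = -‖d‖²`. Hence the Bregman direction `‖d‖^(p-2) • d` (the gradient of
`‖x‖^p / p` at `d`) pairs with each generator to `-‖d‖^p`, while a perturbation `v` with
`‖v‖ ≤ ‖d‖^p` pairs with a unit vector to at most `‖d‖^p`; nonnegative combinations preserve
the sign. -/

open scoped RealInnerProductSpace

section

variable {E : Type*} [NormedAddCommGroup E] [InnerProductSpace ℝ E]

theorem hasGradientAt_norm_rpow_div [CompleteSpace E] (x : E) {p : ℝ} (hp : 1 < p) :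
    HasGradientAt (fun x : E => ‖x‖ ^ p / p) (‖x‖ ^ (p - 2) • x) x := by
  rw [hasGradientAt_iff_hasFDerivAt]
  simp only [div_eq_mul_inv]
  refine ((hasFDerivAt_norm_rpow x hp).mul_const p⁻¹).congr_fderiv ?_
  ext y
  simp only [smul_apply, coe_innerSL_apply, smul_eq_mul, map_smul,
    InnerProductSpace.toDual_apply_apply]
  field_simp [(by linarith : p ≠ 0)]

theorem inner_rpow_smul_eq_neg_rpow {d u : E} {p : ℝ} (hp : p ≠ 0) (hdu : ⟪u + d, d⟫ = 0) :
    ⟪‖d‖ ^ (p - 2) • d, u⟫ = -‖d‖ ^ p := by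
  have hdu' : ⟪d, u⟫ = -‖d‖ ^ 2 := by
    rw [inner_add_left, real_inner_self_eq_norm_sq, real_inner_comm] at hdu
    linarith
  have hsplit : ‖d‖ ^ p = ‖d‖ ^ (p - 2) * ‖d‖ ^ 2 := by
    rw [← Real.rpow_two, ← Real.rpow_add' (norm_nonneg d) (by simpa using hp), sub_add_cancel]
  rw [real_inner_smul_left, hdu', hsplit]
  ring

theorem inner_rpow_smul_add_nonpos {d u v : E} {p : ℝ} (hp : 2 ≤ p) (hdu : ⟪u + d, d⟫ = 0)
    (hu : ‖u‖ ≤ 1) (hv : ‖v‖ ≤ ‖d‖ ^ p) :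
    ⟪‖d‖ ^ (p - 2) • d + v, u⟫ ≤ 0 := by
  have hvu : ⟪v, u⟫ ≤ ‖d‖ ^ p :=
    calc ⟪v, u⟫ ≤ ‖v‖ * ‖u‖ := real_inner_le_norm v u
      _ ≤ ‖v‖ := mul_le_of_le_one_right (norm_nonneg v) hu
      _ ≤ ‖d‖ ^ p := hv
  rw [inner_add_left, inner_rpow_smul_eq_neg_rpow (by linarith) hdu]
  linarith

theorem inner_sum_smul_nonpos {ι : Type*} [Fintype ι] {w : E} {u : ι → E}
    (hwu : ∀ i, ⟪w, u i⟫ ≤ 0) {c : ι → ℝ} (hc : ∀ i, 0 ≤ c i) :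
    ⟪w, ∑ i, c i • u i⟫ ≤ 0 := by
  rw [inner_sum]
  refine Finset.sum_nonpos fun i _ => ?_
  rw [real_inner_smul_right]
  exact mul_nonpos_of_nonneg_of_nonpos (hc i) (hwu i)

end

theorem stmt19_general {n p' : ℕ} (p : ℝ) (hp : 2 ≤ p)
    (u : Fin p' → EuclideanSpace ℝ (Fin n)) (hu : ∀ i, ‖u i‖ = 1)
    (d : EuclideanSpace ℝ (Fin n))
    (horth : ∀ x ∈ affineSpan ℝ (Set.range u), ⟪x + d, d⟫ = 0) :
    gradient (fun x : EuclideanSpace ℝ (Fin n) => ‖x‖ ^ p / p) (-d) =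
      -((‖d‖ ^ (p - 2)) • d) ∧
    ∀ v : EuclideanSpace ℝ (Fin n), ‖v‖ ≤ ‖d‖ ^ p →
      ∀ z ∈ {z : EuclideanSpace ℝ (Fin n) |
          ∃ c : Fin p' → ℝ, (∀ i, 0 ≤ c i) ∧ z = ∑ i, c i • u i},
        ⟪(‖d‖ ^ (p - 2)) • d + v, z⟫ ≤ 0 := by
  refine ⟨?_, ?_⟩
  · rw [(hasGradientAt_norm_rpow_div (-d) (by linarith)).gradient, norm_neg, smul_neg]
  · rintro v hv z ⟨c, hc, rfl⟩
    refine inner_sum_smul_nonpos (fun i => ?_) hc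
    exact inner_rpow_smul_add_nonpos hp
      (horth (u i) (subset_affineSpan ℝ _ (Set.mem_range_self i))) (hu i).le hv

theorem stmt19 {n p' : ℕ} (p : ℝ) (hp : 2 ≤ p)
    (u : Fin p' → EuclideanSpace ℝ (Fin n)) (hu : ∀ i, ‖u i‖ = 1)
    (h0 : (0 : EuclideanSpace ℝ (Fin n)) ∉ affineSpan ℝ (Set.range u))
    (d : EuclideanSpace ℝ (Fin n))
    (hmem : -d ∈ affineSpan ℝ (Set.range u))
    (horth : ∀ x ∈ affineSpan ℝ (Set.range u), ⟪x + d, d⟫ = 0) :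
    gradient (fun x : EuclideanSpace ℝ (Fin n) => ‖x‖ ^ p / p) (-d) =
      -((‖d‖ ^ (p - 2)) • d) ∧
    ∀ v : EuclideanSpace ℝ (Fin n), ‖v‖ ≤ ‖d‖ ^ p →
      ∀ z ∈ {z : EuclideanSpace ℝ (Fin n) |
          ∃ c : Fin p' → ℝ, (∀ i, 0 ≤ c i) ∧ z = ∑ i, c i • u i},
        ⟪(‖d‖ ^ (p - 2)) • d + v, z⟫ ≤ 0 :=
  stmt19_general p hp u hu d horth
end
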